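/- Given any instance Nim−F of CIS-Nim, for every x > 4·F_max + 3·|F|, if {x,y,z} is a P-position with z < y < x, then x ≤ 2y. (Equivalently, every element (x,y) of S satisfies x ≤ 2y.) -/
import Mathlib


open Filter

/-- A move in Nim: strictly decrease one heap. -/
def NimMove (a b : Multiset ℕ) : Prop :=
  ∃ x y, x ∈ a ∧ y < x ∧ b = y ::ₘ a.erase x

theorem NimMove.sum_lt {a b : Multiset ℕ} (h : NimMove a b) : b.sum < a.sum := by
  obtain ⟨x, y, hx, hyx, rfl⟩ := h
  have hc : x ::ₘ a.erase x = a := Multiset.cons_erase hx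
  have h1 : (y ::ₘ a.erase x).sum = y + (a.erase x).sum := Multiset.sum_cons y _
  have h2 : a.sum = x + (a.erase x).sum := by
    conv_lhs => rw [← hc]
    exact Multiset.sum_cons x _
  omega

/-- P-positions of Nim minus a forbidden finite set `F`, by the standard recursion:
a position is P iff every child not in `F` is an N-position. -/
def NimP (F : Finset (Multiset ℕ)) (a : Multiset ℕ) : Prop :=
  ∀ b, NimMove a b → b ∉ F → ¬ NimP F b
termination_by a.sum
decreasing_by exact NimMove.sum_lt (by assumption)

/-- A P-position of Nim−F : a valid position (not forbidden) which is P. -/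
def PPos (F : Finset (Multiset ℕ)) (a : Multiset ℕ) : Prop :=
  a ∉ F ∧ NimP F a

/-- Largest heap size appearing in any forbidden position. -/
def Fmax (F : Finset (Multiset ℕ)) : ℕ := F.sup Multiset.sup

/-- The set S of pairs (x,y) such that there is z with z < y < x and {x,y,z} a P-position. -/
def Sset (F : Finset (Multiset ℕ)) : Set (ℕ × ℕ) :=
  {p | ∃ z, z < p.2 ∧ p.2 < p.1 ∧ PPos F {p.1, p.2, z}}

/-- r(x,y): number of elements of S of the form (x',y) with x' ≥ x. -/
noncomputable def rdef (F : Finset (Multiset ℕ)) (x y : ℕ) : ℕ :=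
  {x' | x ≤ x' ∧ (x', y) ∈ Sset F}.ncard

/-- b(x,y): number of elements of S of the form (x,y') with y' ≤ y. -/
noncomputable def bdef (F : Finset (Multiset ℕ)) (x y : ℕ) : ℕ :=
  {y' | y' ≤ y ∧ (x, y') ∈ Sset F}.ncard

/-- U_{x,y} = A ∪ B ∪ C ∪ D. -/
def Uset (F : Finset (Multiset ℕ)) (x y : ℕ) : Set (ℕ × ℕ) :=
  {p | (p.2 < p.1 ∧ p.1 ≤ x ∧ bdef F p.1 p.1 ≥ p.1 - p.2) ∨
       (p.1 = x ∧ p.2 < y ∧ bdef F x (y - 1) ≥ y - p.2) ∨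
       (y ≤ p.2 ∧ p.2 < x ∧ x ≤ p.1 ∧ rdef F x p.2 > p.1 - x) ∨
       (p.2 < y ∧ y ≤ x ∧ x < p.1 ∧ rdef F (x + 1) p.2 > p.1 - (x + 1))}

/-- Ū_{x,y}: agrees with U_{x,y} for second coordinate < x, and for y' ≥ x contains
(x',y') iff y' < x' ≤ 2y' and (y', ⌊x'/2⌋) ∉ Ū_{x,y}. -/
def Ubar (F : Finset (Multiset ℕ)) (x y : ℕ) (p : ℕ × ℕ) : Prop :=
  if p.2 < x then p ∈ Uset F x y
  else if h : p.2 < p.1 then p.1 ≤ 2 * p.2 ∧ ¬ Ubar F x y (p.2, p.1 / 2)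
  else False
termination_by p.1
decreasing_by exact h

/-- S_n = Ū_{n,0}. -/
def Sn (F : Finset (Multiset ℕ)) (n : ℕ) : Set (ℕ × ℕ) := {p | Ubar F n 0 p}

/-- R_n = {(x,y) : y < n ≤ x ≤ 2y}. -/
def Rn (n : ℕ) : Set (ℕ × ℕ) := {p | p.2 < n ∧ n ≤ p.1 ∧ p.1 ≤ 2 * p.2}

/-- h(m,n) = |R_n ∩ S_m|. -/
noncomputable def hdef (F : Finset (Multiset ℕ)) (m n : ℕ) : ℕ := (Rn n ∩ Sn F m).ncard

/-- π(n): number of P-positions (unordered multisets) with all entries < n. -/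
noncomputable def piNim (F : Finset (Multiset ℕ)) (n : ℕ) : ℕ :=
  {s : Multiset ℕ | s.card = 3 ∧ (∀ a ∈ s, a < n) ∧ PPos F s}.ncard

lemma nimP_def (F : Finset (Multiset ℕ)) (a : Multiset ℕ) :
    NimP F a ↔ ∀ b, NimMove a b → b ∉ F → ¬ NimP F b := by
  rw [NimP]

lemma move_head {a' a : ℕ} (s : Multiset ℕ) (h : a' < a) : NimMove (a ::ₘ s) (a' ::ₘ s) :=
  ⟨a, a', Multiset.mem_cons_self a s, h, by rw [Multiset.erase_cons_head]⟩

lemma Tlem (F : Finset (Multiset ℕ)) (s : Multiset ℕ) {t1 t2 : ℕ}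
    (h1 : PPos F (t1 ::ₘ s)) (h2 : PPos F (t2 ::ₘ s)) (h : t1 < t2) : False :=
  ((nimP_def F _).mp h2.2) _ (move_head s h) h1.1 h1.2

lemma key (F G : Finset (Multiset ℕ)) (a b c : ℕ) (hP : PPos F (a ::ₘ b ::ₘ {c}))
    (hG : ∀ t, t < a → (t ::ₘ b ::ₘ {c}) ∈ F → (t ::ₘ b ::ₘ {c}) ∈ G) :
    a ≤ b + c + G.card := by
  classical
  set tgt : Finset (ℕ ⊕ ℕ ⊕ Multiset ℕ) :=
    (Finset.range b).disjSum ((Finset.range c).disjSum G) with htgt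
  set Q : ℕ → (ℕ ⊕ ℕ ⊕ Multiset ℕ) → Prop := fun t w =>
    Sum.elim (fun y => PPos F (t ::ₘ y ::ₘ {c}))
      (Sum.elim (fun y => PPos F (t ::ₘ y ::ₘ {b})) (fun s => s = t ::ₘ b ::ₘ {c})) w with hQ
  have hex : ∀ t : ℕ, ∃ w, t < a → w ∈ tgt ∧ Q t w := by
    intro t
    by_cases ht : t < a
    swap
    · exact ⟨Sum.inl 0, fun h => absurd h ht⟩
    by_cases hpF : (t ::ₘ b ::ₘ {c}) ∈ F
    · refine ⟨Sum.inr (Sum.inr (t ::ₘ b ::ₘ {c})), fun _ => ⟨?_, rfl⟩⟩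
      simp [htgt, hG t ht hpF]
    · have hN : ¬ NimP F (t ::ₘ b ::ₘ {c}) :=
        ((nimP_def F _).mp hP.2) _ (move_head _ ht) hpF
      rw [nimP_def] at hN
      push_neg at hN
      obtain ⟨q, hq1, hq2, hq3⟩ := hN
      obtain ⟨xx, yy, hmem, hyy, rfl⟩ := hq1
      have hmem' : xx = t ∨ xx = b ∨ xx = c := by
        simpa [Multiset.mem_cons, Multiset.mem_singleton] using hmem
      rcases hmem' with rfl | rfl | rfl
      · -- reduced the t heap: contradiction with Tlem against a
        rw [Multiset.erase_cons_head] at hq2 hq3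
        exact absurd (Tlem F (b ::ₘ {c}) ⟨hq2, hq3⟩ hP (lt_trans hyy ht)) (by simp)
      · -- reduced the b heap
        have he : (t ::ₘ xx ::ₘ ({c} : Multiset ℕ)).erase xx = t ::ₘ {c} := by
          rw [Multiset.cons_swap, Multiset.erase_cons_head]
        rw [he] at hq2 hq3
        refine ⟨Sum.inl yy, fun _ => ⟨by simp [htgt, hyy], ?_⟩⟩
        show PPos F (t ::ₘ yy ::ₘ {c})
        rw [Multiset.cons_swap]
        exact ⟨hq2, hq3⟩
      · -- reduced the c heap
        have he : (t ::ₘ b ::ₘ ({xx} : Multiset ℕ)).erase xx = t ::ₘ {b} := by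
          rw [← Multiset.cons_zero xx, ← Multiset.cons_zero b, Multiset.cons_swap b xx,
            Multiset.cons_swap t xx, Multiset.erase_cons_head, Multiset.cons_zero]
        rw [he] at hq2 hq3
        refine ⟨Sum.inr (Sum.inl yy), fun _ => ⟨by simp [htgt, hyy], ?_⟩⟩
        show PPos F (t ::ₘ yy ::ₘ {b})
        rw [Multiset.cons_swap]
        exact ⟨hq2, hq3⟩
  choose f hf using hex
  have hcard : (Finset.range a).card ≤ tgt.card := by
    apply Finset.card_le_card_of_injOn f
    · intro t ht
      exact (hf t (Finset.mem_range.mp ht)).1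
    · intro t1 ht1 t2 ht2 heq
      have q1 := (hf t1 (Finset.mem_range.mp (by simpa using ht1))).2
      have q2 := (hf t2 (Finset.mem_range.mp (by simpa using ht2))).2
      rw [heq] at q1
      rcases hft : f t2 with y | y | s <;> rw [hft] at q1 q2 <;> simp only [hQ, Sum.elim_inl, Sum.elim_inr] at q1 q2
      · rcases lt_trichotomy t1 t2 with h | h | h
        · exact absurd (Tlem F (y ::ₘ {c}) q1 q2 h) (by simp)
        · exact h
        · exact absurd (Tlem F (y ::ₘ {c}) q2 q1 h) (by simp)
      · rcases lt_trichotomy t1 t2 with h | h | h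
        · exact absurd (Tlem F (y ::ₘ {b}) q1 q2 h) (by simp)
        · exact h
        · exact absurd (Tlem F (y ::ₘ {b}) q2 q1 h) (by simp)
      · have : (t1 ::ₘ b ::ₘ ({c} : Multiset ℕ)).sum = (t2 ::ₘ b ::ₘ ({c} : Multiset ℕ)).sum := by
          rw [← q1, ← q2]
        simp [Multiset.sum_cons] at this
        omega
  simpa [htgt, Finset.card_disjSum, Finset.card_range, add_assoc] using hcard

lemma entry_le_Fmax {F : Finset (Multiset ℕ)} {s : Multiset ℕ} (hs : s ∈ F) {x : ℕ}
    (hx : x ∈ s) : x ≤ Fmax F :=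
  le_trans (Multiset.le_sup hx) (Finset.le_sup hs)

lemma weak (F : Finset (Multiset ℕ)) (a b c : ℕ) (hP : PPos F (a ::ₘ b ::ₘ {c}))
    (ha : 2 * Fmax F + F.card < a) : a ≤ b + c := by
  by_contra h
  push_neg at h
  have h1 : a ≤ b + c + F.card := key F F a b c hP (fun t ht hF => hF)
  have hbc : 2 * Fmax F + 1 ≤ b + c := by omega
  have hbig : Fmax F < b ∨ Fmax F < c := by omega
  have h2 : a ≤ b + c + (∅ : Finset (Multiset ℕ)).card := by
    rcases hbig with hb | hc
    · refine key F ∅ a b c hP (fun t ht hF => absurd ?_ (not_le.mpr hb))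
      exact entry_le_Fmax hF (by simp)
    · have hP' : PPos F (a ::ₘ c ::ₘ {b}) := by
        have : a ::ₘ c ::ₘ ({b} : Multiset ℕ) = a ::ₘ b ::ₘ {c} := by
          rw [← Multiset.cons_zero b, ← Multiset.cons_zero c, Multiset.cons_swap c b]
        rwa [this]
      have := key F ∅ a c b hP' (fun t ht hF => absurd (entry_le_Fmax hF (by simp)) (not_le.mpr hc))
      omega
  simp at h2
  omega

/-- For x > 4·F_max + 3·|F|, any P-position {x,y,z} with z < y < x satisfies x ≤ 2y. -/
theorem S_mem_le_two_mul (F : Finset (Multiset ℕ)) (x y z : ℕ)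
    (hx : x > 4 * Fmax F + 3 * F.card)
    (hP : PPos F {x, y, z}) (hzy : z < y) (hyx : y < x) : x ≤ 2 * y := by
  have hP' : PPos F (x ::ₘ y ::ₘ {z}) := hP
  have := weak F x y z hP' (by omega)
  omega
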